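/- arXiv:quant-ph/0106132 — 5 statements merged into one kernel-verified Lean document; each statement's English description precedes it below -/
import Mathlib

section
/- In a complete state property space: for all p, q ∈ Σ we have p ≺ q if and only if s(p) ≺ s(q), and for all a, b ∈ L we have a ≺ b if and only if t(a) ≺ t(b). -/
/-! κ (s p) is the principal up-set of p for state implication, and in any preorder
`x ≤ y ↔ Ici y ⊆ Ici x`. The statement about `t` is the same one with the roles of states
and properties exchanged. -/

theorem setOf_le_subset_setOf_le_iff {α β : Type*} [Preorder β] (f : α → β) (p q : α) :
    {r | f p ≤ f r} ⊆ {r | f q ≤ f r} ↔ f q ≤ f p :=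
  ⟨fun hsub => hsub (le_refl (f p)), fun hqp _ hr => hqp.trans hr⟩

section StatePropertySpace

variable {St Pr : Type*} {ξ : St → Set Pr} {κ : Pr → Set St}

theorem kappa_meet_eq (h : ∀ (p : St) (a : Pr), a ∈ ξ p ↔ p ∈ κ a) {s : St → Pr}
    (hs : ∀ p q : St, s p ∈ ξ q ↔ ξ p ⊆ ξ q) (p : St) :
    κ (s p) = {q | ξ p ⊆ ξ q} :=
  Set.ext fun q => (h q (s p)).symm.trans (hs p q)

theorem subset_iff_kappa_meet_subset (h : ∀ (p : St) (a : Pr), a ∈ ξ p ↔ p ∈ κ a)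
    {s : St → Pr} (hs : ∀ p q : St, s p ∈ ξ q ↔ ξ p ⊆ ξ q) (p q : St) :
    ξ q ⊆ ξ p ↔ κ (s p) ⊆ κ (s q) := by
  rw [kappa_meet_eq h hs, kappa_meet_eq h hs]
  exact (setOf_le_subset_setOf_le_iff ξ p q).symm

end StatePropertySpace

/-- In a complete state property space, with `s p` the property state
of `p` (characterized by `s p ∈ ξ q ↔ ξ p ⊆ ξ q`) and `t a` the state property of `a`
(characterized by `t a ∈ κ b ↔ κ a ⊆ κ b`): `p ≺ q ↔ s p ≺ s q` and `a ≺ b ↔ t a ≺ t b`,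
where the state implication is `p ≺ q ↔ ξ q ⊆ ξ p` and the property implication is
`a ≺ b ↔ κ a ⊆ κ b`. -/
theorem property_state_and_state_property_preserve_implication
    {St Pr : Type*} (ξ : St → Set Pr) (κ : Pr → Set St)
    (h : ∀ (p : St) (a : Pr), a ∈ ξ p ↔ p ∈ κ a)
    (s : St → Pr) (hs : ∀ p q : St, s p ∈ ξ q ↔ ξ p ⊆ ξ q)
    (t : Pr → St) (ht : ∀ a b : Pr, t a ∈ κ b ↔ κ a ⊆ κ b) :
    (∀ p q : St, ξ q ⊆ ξ p ↔ κ (s p) ⊆ κ (s q)) ∧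
    (∀ a b : Pr, κ a ⊆ κ b ↔ ξ (t b) ⊆ ξ (t a)) :=
  ⟨subset_iff_kappa_meet_subset h hs,
    fun a b => subset_iff_kappa_meet_subset (fun a p => (h p a).symm) ht b a⟩
end

section
/- In a complete state property space: for every family (a_i)_{i∈I} of properties, the state t(∧_i a_i) is an infimum of the family (t(a_i))_{i∈I} with respect to the state implication pre-order (it satisfies t(∧_i a_i) ≺ t(a_k) for every k, and every state q with q ≺ t(a_k) for all k satisfies q ≺ t(∧_i a_i)); and for every family (p_j)_{j∈J} of states, the property s(∨_j p_j) is a supremum of the family (s(p_j))_{j∈J} with respect to the property implication pre-order. -/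
/-!
The state `t a` is the least state with property `a`: `ξ (t a) ⊆ ξ q ↔ q ∈ κ a`. Hence the
states above `t (∧ᵢ aᵢ)` are those having every `aᵢ`, i.e. those above every `t aᵢ`. The
statement about `s` is the same statement for the dual space, with the roles of states and
properties exchanged.
-/

namespace StatePropertySpace

variable {St Pr : Type*} {ξ : St → Set Pr} {κ : Pr → Set St}

theorem xi_subset_iff_mem_kappa (h : ∀ (p : St) (a : Pr), a ∈ ξ p ↔ p ∈ κ a)
    {a : Pr} {x : St} (hx : ∀ b, x ∈ κ b ↔ κ a ⊆ κ b) (q : St) :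
    ξ x ⊆ ξ q ↔ q ∈ κ a := by
  refine ⟨fun hxq => (h q a).1 (hxq ((h x a).2 ((hx a).2 subset_rfl))), fun hq b hb => ?_⟩
  exact (h q b).2 ((hx b).1 ((h x b).1 hb) hq)

theorem join_of_meet_isInf (h : ∀ (p : St) (a : Pr), a ∈ ξ p ↔ p ∈ κ a)
    (t : Pr → St) (ht : ∀ a b : Pr, t a ∈ κ b ↔ κ a ⊆ κ b)
    {ι : Type*} (a : ι → Pr) (m : Pr) (hm : ∀ p : St, m ∈ ξ p ↔ ∀ i, a i ∈ ξ p) :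
    (∀ k : ι, ξ (t (a k)) ⊆ ξ (t m)) ∧
      (∀ q : St, (∀ k : ι, ξ (t (a k)) ⊆ ξ q) → ξ (t m) ⊆ ξ q) := by
  have upper_iff : ∀ q, ξ (t m) ⊆ ξ q ↔ ∀ k, ξ (t (a k)) ⊆ ξ q := by
    simp only [xi_subset_iff_mem_kappa h (ht _), ← h, hm, implies_true]
  exact ⟨(upper_iff _).1 subset_rfl, fun q => (upper_iff q).2⟩

end StatePropertySpace

open StatePropertySpace in
/-- In a complete state property space, with `s` and `t` the property state
and state property maps: for every family `(aᵢ)` of properties with meet property `m`,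
the state `t m` is an infimum of the family `(t (aᵢ))` with respect to the state
implication pre-order (`p ≺ q` iff `ξ q ⊆ ξ p`); and for every family `(pⱼ)` of states
with join state `v`, the property `s v` is a supremum of the family `(s (pⱼ))` with
respect to the property implication pre-order (`a ≺ b` iff `κ a ⊆ κ b`). -/
theorem t_of_meet_is_infimum_and_s_of_join_is_supremum
    {St Pr : Type*} (ξ : St → Set Pr) (κ : Pr → Set St)
    (h : ∀ (p : St) (a : Pr), a ∈ ξ p ↔ p ∈ κ a)
    (s : St → Pr) (hs : ∀ p q : St, s p ∈ ξ q ↔ ξ p ⊆ ξ q)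
    (t : Pr → St) (ht : ∀ a b : Pr, t a ∈ κ b ↔ κ a ⊆ κ b) :
    (∀ {ι : Type*} (a : ι → Pr) (m : Pr),
      (∀ p : St, m ∈ ξ p ↔ ∀ i, a i ∈ ξ p) →
      (∀ k : ι, ξ (t (a k)) ⊆ ξ (t m)) ∧
      (∀ q : St, (∀ k : ι, ξ (t (a k)) ⊆ ξ q) → ξ (t m) ⊆ ξ q)) ∧
    (∀ {ι : Type*} (p : ι → St) (v : St),
      (∀ a : Pr, v ∈ κ a ↔ ∀ j, p j ∈ κ a) →
      (∀ l : ι, κ (s (p l)) ⊆ κ (s v)) ∧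
      (∀ b : Pr, (∀ l : ι, κ (s (p l)) ⊆ κ b) → κ (s v) ⊆ κ b)) :=
  ⟨join_of_meet_isInf h t ht,
    join_of_meet_isInf (fun a p => (h p a).symm) s hs⟩
end

section
/- In a complete state property space: for every p ∈ Σ, ξ(p) = {a ∈ L | s(p) ≺ a}, and for every a ∈ L, κ(a) = {p ∈ Σ | p ≺ t(a)}. -/
section

variable {St Pr : Type*} {ξ : St → Set Pr} {κ : Pr → Set St}

theorem kappa_eq_setOf_xi_subset (h : ∀ (p : St) (a : Pr), a ∈ ξ p ↔ p ∈ κ a) {p : St} {m : Pr}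
    (hm : ∀ q : St, m ∈ ξ q ↔ ξ p ⊆ ξ q) : κ m = {q : St | ξ p ⊆ ξ q} :=
  Set.ext fun q => (h q m).symm.trans (hm q)

theorem xi_eq_setOf_kappa_subset (h : ∀ (p : St) (a : Pr), a ∈ ξ p ↔ p ∈ κ a) {p : St} {m : Pr}
    (hm : ∀ q : St, m ∈ ξ q ↔ ξ p ⊆ ξ q) : ξ p = {a : Pr | κ m ⊆ κ a} := by
  rw [kappa_eq_setOf_xi_subset h hm]
  ext a
  exact ⟨fun ha q hq => (h q a).1 (hq ha), fun hsub => (h p a).2 (hsub (Set.Subset.refl (ξ p)))⟩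

end

/-- In a complete state property space, for every state `p`,
`ξ p = {a | s p ≺ a}` (i.e. `{a | κ (s p) ⊆ κ a}`), and for every property `a`,
`κ a = {p | p ≺ t a}` (i.e. `{p | ξ (t a) ⊆ ξ p}`). -/
theorem xi_and_kappa_are_intervals
    {St Pr : Type*} (ξ : St → Set Pr) (κ : Pr → Set St)
    (h : ∀ (p : St) (a : Pr), a ∈ ξ p ↔ p ∈ κ a)
    (s : St → Pr) (hs : ∀ p q : St, s p ∈ ξ q ↔ ξ p ⊆ ξ q)
    (t : Pr → St) (ht : ∀ a b : Pr, t a ∈ κ b ↔ κ a ⊆ κ b) :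
    (∀ p : St, ξ p = {a : Pr | κ (s p) ⊆ κ a}) ∧
    (∀ a : Pr, κ a = {p : St | ξ (t a) ⊆ ξ p}) :=
  -- The second half is the first one for the dual space, with the roles of `ξ` and `κ` swapped.
  ⟨fun p => xi_eq_setOf_kappa_subset h (hs p),
    fun a => xi_eq_setOf_kappa_subset (fun a p => (h p a).symm) (ht a)⟩
end

section
/- Let (Σ, L, ξ, κ) be a state property system in which the lattice order coincides with property implication (for all a, b ∈ L: a ≤ b ↔ κ(a) ⊆ κ(b)), and for p ∈ Σ let s(p) := ⨅_{a ∈ ξ(p)} a. Then s maps the set of atomic states onto the set of atoms of L: (1) if p is an atomic state then s(p) is an atom of L; (2) for every atom a of L there exists an atomic state p with s(p) = a. -/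
/-! The hypotheses make `ξ p` the principal filter `Ici (s p)` of `s p = sInf (ξ p)`, so `p ≺ q`
iff `s p ≤ s q`, and the atomic states are those whose `s`-value is minimal in the range of `s`.
That range avoids `⊥` and lies below every nonzero property, and for such a set the minimal
elements are exactly the atoms. -/

open Set

theorem minimal_mem_iff_isAtom {α : Type*} [PartialOrder α] [OrderBot α] {S : Set α}
    (hS : ⊥ ∉ S) (hcov : ∀ b, b ≠ ⊥ → ∃ x ∈ S, x ≤ b) {a : α} :
    Minimal (· ∈ S) a ↔ IsAtom a := by
  have ne_bot {x : α} (hx : x ∈ S) : x ≠ ⊥ := fun h => hS (h ▸ hx)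
  refine ⟨fun ha => ⟨ne_bot ha.prop, fun b hba => ?_⟩, fun ha => ?_⟩
  · by_contra hb
    obtain ⟨x, hxS, hxb⟩ := hcov b hb
    exact (hxb.trans_lt hba).not_ge (ha.le_of_le hxS (hxb.trans hba.le))
  · have eq_of_le {x : α} (hx : x ∈ S) (hxa : x ≤ a) : x = a :=
      (ha.le_iff.mp hxa).resolve_left (ne_bot hx)
    obtain ⟨x, hxS, hxa⟩ := hcov a ha.1
    exact ⟨eq_of_le hxS hxa ▸ hxS, fun y hyS hya => (eq_of_le hyS hya).ge⟩

theorem minimal_mem_range_iff {ι α : Type*} [PartialOrder α] {s : ι → α} {i : ι} :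
    Minimal (· ∈ range s) (s i) ↔ ∀ j, s j ≤ s i → s j = s i := by
  simp only [Minimal, mem_range_self, forall_mem_range, true_and]
  exact forall_congr' fun j => ⟨fun h hj => hj.antisymm (h hj), fun h hj => (h hj).ge⟩

section StatePropertySystem

variable {St Pr : Type*} [CompleteLattice Pr] {ξ : St → Set Pr} {κ : Pr → Set St}

theorem eq_Ici_sInf (h : ∀ p a, a ∈ ξ p ↔ p ∈ κ a) (hOrd : ∀ a b, a ≤ b ↔ κ a ⊆ κ b)
    (hMeet : ∀ (A : Set Pr) (p : St), (∀ a ∈ A, a ∈ ξ p) ↔ sInf A ∈ ξ p) (p : St) :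
    ξ p = Ici (sInf (ξ p)) := by
  refine Subset.antisymm (fun a ha => sInf_le ha) fun b hb => ?_
  have hsInf : sInf (ξ p) ∈ ξ p := (hMeet (ξ p) p).mp fun _ => id
  exact (h p b).mpr ((hOrd _ b).mp hb ((h p _).mp hsInf))

theorem exists_mem_of_ne_bot (h : ∀ p a, a ∈ ξ p ↔ p ∈ κ a) (hOrd : ∀ a b, a ≤ b ↔ κ a ⊆ κ b)
    {b : Pr} (hb : b ≠ ⊥) : ∃ p, b ∈ ξ p := by
  by_contra! hnone
  exact hb (le_bot_iff.mp ((hOrd b ⊥).mpr fun p hp => absurd ((h p b).mpr hp) (hnone p)))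

end StatePropertySystem

theorem atomic_states_map_onto_atoms_general
    {St Pr : Type*} [CompleteLattice Pr]
    (ξ : St → Set Pr) (κ : Pr → Set St)
    (h : ∀ (p : St) (a : Pr), a ∈ ξ p ↔ p ∈ κ a)
    (hOrd : ∀ a b : Pr, a ≤ b ↔ κ a ⊆ κ b)
    (hBot : ∀ p : St, ⊥ ∉ ξ p)
    (hMeet : ∀ (A : Set Pr) (p : St), (∀ a ∈ A, a ∈ ξ p) ↔ sInf A ∈ ξ p) :
    (∀ p : St, (∀ q : St, ξ p ⊆ ξ q → ξ q = ξ p) → IsAtom (sInf (ξ p))) ∧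
    (∀ a : Pr, IsAtom a →
      ∃ p : St, (∀ q : St, ξ p ⊆ ξ q → ξ q = ξ p) ∧ sInf (ξ p) = a) := by
  set s : St → Pr := fun p => sInf (ξ p)
  have hξ : ∀ p, ξ p = Ici (s p) := eq_Ici_sInf h hOrd hMeet
  have atomic_iff (p : St) :
      (∀ q, ξ p ⊆ ξ q → ξ q = ξ p) ↔ Minimal (· ∈ range s) (s p) := by
    simp only [hξ, Ici_subset_Ici, Ici_inj, minimal_mem_range_iff]
  have hS : ⊥ ∉ range s := by
    rintro ⟨p, hp⟩
    exact hBot p (by rw [hξ p, ← hp]; exact mem_Ici.mpr le_rfl)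
  have hcov (b : Pr) (hb : b ≠ ⊥) : ∃ x ∈ range s, x ≤ b :=
    let ⟨p, hp⟩ := exists_mem_of_ne_bot h hOrd hb
    ⟨s p, mem_range_self p, sInf_le hp⟩
  refine ⟨fun p hp => (minimal_mem_iff_isAtom hS hcov).mp ((atomic_iff p).mp hp), fun a ha => ?_⟩
  have ha_min := (minimal_mem_iff_isAtom hS hcov).mpr ha
  obtain ⟨p, rfl⟩ := ha_min.prop
  exact ⟨p, (atomic_iff p).mpr ha_min, rfl⟩

/-- In a state property system whose complete-lattice order coincides
with property implication (`a ≤ b ↔ κ a ⊆ κ b`), the map `s : p ↦ ⨅_{a ∈ ξ p} a = sInf (ξ p)`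
maps the set of atomic states onto the set of atoms of the property lattice:
(1) if `p` is an atomic state (every `q ≺ p` satisfies `q ≈ p`, i.e. every `q` with
`ξ p ⊆ ξ q` has `ξ q = ξ p`) then `sInf (ξ p)` is an atom;
(2) every atom `a` is of the form `sInf (ξ p)` for some atomic state `p`. -/
theorem atomic_states_map_onto_atoms
    {St Pr : Type*} [CompleteLattice Pr]
    (ξ : St → Set Pr) (κ : Pr → Set St)
    (h : ∀ (p : St) (a : Pr), a ∈ ξ p ↔ p ∈ κ a)
    (hOrd : ∀ a b : Pr, a ≤ b ↔ κ a ⊆ κ b)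
    (hTop : ∀ p : St, ⊤ ∈ ξ p) (hBot : ∀ p : St, ⊥ ∉ ξ p)
    (hMeet : ∀ (A : Set Pr) (p : St), (∀ a ∈ A, a ∈ ξ p) ↔ sInf A ∈ ξ p) :
    (∀ p : St, (∀ q : St, ξ p ⊆ ξ q → ξ q = ξ p) → IsAtom (sInf (ξ p))) ∧
    (∀ a : Pr, IsAtom a →
      ∃ p : St, (∀ q : St, ξ p ⊆ ξ q → ξ q = ξ p) ∧ sInf (ξ p) = a) :=
  atomic_states_map_onto_atoms_general ξ κ h hOrd hBot hMeet
end

section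
/- Let L₁ and L₂ be complete atomistic lattices and let L₁ ∐ L₂ be their coproduct. If L₁ ∐ L₂ satisfies the covering law, then L₁ is trivial (every element of L₁ equals ⊥₁ or ⊤₁) or L₂ is trivial (every element of L₂ equals ⊥₂ or ⊤₂). Consequently, for two nontrivial entities the property lattice of their minimal compound entity never satisfies the covering law. -/
/-!
Take distinct atoms `p₁ ≠ q₁` of `L₁` and `p₂ ≠ q₂` of `L₂` (they exist as soon as a factor has an
element other than `⊥` and `⊤`, by atomisticity). In the coproduct, `c = (q₁, q₂)` is an atom,
`a = (p₁, p₂)` meets it in `0` because `p₁ ⊓ q₁ = ⊥`, and `a ⊔ c = (p₁ ⊔ q₁, p₂ ⊔ q₂)`. The element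
`(p₁ ⊔ q₁, p₂)` lies strictly between `a` and `a ⊔ c`, violating the covering law.
-/

/-- The covering law, with meets and joins expressed through `IsGLB` and `IsLUB` so that it makes
sense in any partial order with a bottom element. -/
def CoveringLaw (α : Type*) [PartialOrder α] [OrderBot α] : Prop :=
  ∀ c a b s : α, IsAtom c → IsGLB {a, c} ⊥ → IsLUB {a, c} s → a ≤ b → b ≤ s → b = a ∨ b = s

theorem exists_atoms_ne_of_ne_bot_of_ne_top {α : Type*} [PartialOrder α] [BoundedOrder α]
    [IsAtomistic α] {x : α} (hbot : x ≠ ⊥) (htop : x ≠ ⊤) :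
    ∃ p q : α, IsAtom p ∧ IsAtom q ∧ p ≠ q := by
  obtain ⟨p, hp, hpx⟩ := (eq_bot_or_exists_atom_le x).resolve_left hbot
  obtain ⟨q, hq, hqx⟩ : ∃ q : α, IsAtom q ∧ ¬ q ≤ x := by
    by_contra! h
    exact htop (top_le_iff.1 (le_iff_atom_le_imp.2 fun q hq _ => h q hq))
  exact ⟨p, q, hp, hq, fun hpq => hqx (hpq ▸ hpx)⟩

namespace WithBot

variable {α : Type*} [Preorder α]

theorem isAtom_coe_iff {a : α} : IsAtom (a : WithBot α) ↔ IsMin a := by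
  simp [IsAtom, isMin_iff_forall_not_lt, WithBot.forall]

theorem isGLB_image_coe_bot_iff {s : Set α} :
    IsGLB (((↑) : α → WithBot α) '' s) ⊥ ↔ lowerBounds s = ∅ := by
  simp [IsGLB, IsGreatest, upperBounds, lowerBounds, WithBot.forall, Set.eq_empty_iff_forall_notMem]

theorem isLUB_image_coe {s : Set α} {a : α} (hs : s.Nonempty) (h : IsLUB s a) :
    IsLUB (((↑) : α → WithBot α) '' s) a := by
  refine ⟨coe_mono.mem_upperBounds_image h.1, fun z hz => ?_⟩
  induction z using recBotCoe with
  | bot =>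
    obtain ⟨x, hx⟩ := hs
    exact absurd (hz ⟨x, hx, rfl⟩) (not_coe_le_bot x)
  | coe y => exact coe_le_coe.2 (h.2 fun x hx => coe_le_coe.1 (hz ⟨x, hx, rfl⟩))

end WithBot

/-- The coproduct `L₁ ∐ L₂`: `⊥` plays the role of the added element `0`. -/
abbrev LatticeCoprod (L₁ L₂ : Type*) [LE L₁] [OrderBot L₁] [LE L₂] [OrderBot L₂] : Type _ :=
  WithBot {x : L₁ × L₂ // x.1 ≠ ⊥ ∧ x.2 ≠ ⊥}

namespace LatticeCoprod

variable {L₁ L₂ : Type*}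

section PartialOrder

variable [PartialOrder L₁] [OrderBot L₁] [PartialOrder L₂] [OrderBot L₂]

def mk (a₁ : L₁) (a₂ : L₂) (h₁ : a₁ ≠ ⊥) (h₂ : a₂ ≠ ⊥) : LatticeCoprod L₁ L₂ :=
  ((⟨(a₁, a₂), h₁, h₂⟩ : {x : L₁ × L₂ // x.1 ≠ ⊥ ∧ x.2 ≠ ⊥}) : WithBot _)

variable {a₁ b₁ : L₁} {a₂ b₂ : L₂} {ha₁ : a₁ ≠ ⊥} {hb₁ : b₁ ≠ ⊥} {ha₂ : a₂ ≠ ⊥} {hb₂ : b₂ ≠ ⊥}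

@[simp]
theorem mk_le_mk : mk a₁ a₂ ha₁ ha₂ ≤ mk b₁ b₂ hb₁ hb₂ ↔ a₁ ≤ b₁ ∧ a₂ ≤ b₂ := by
  simp [mk]

@[simp]
theorem mk_inj : mk a₁ a₂ ha₁ ha₂ = mk b₁ b₂ hb₁ hb₂ ↔ a₁ = b₁ ∧ a₂ = b₂ := by
  simp [mk]

theorem isAtom_mk (h₁ : IsAtom a₁) (h₂ : IsAtom a₂) : IsAtom (mk a₁ a₂ h₁.ne_bot h₂.ne_bot) := by
  refine WithBot.isAtom_coe_iff.2 fun y hy => ?_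
  have e₁ : y.1.1 = a₁ := (h₁.le_iff_eq y.2.1).1 hy.1
  have e₂ : y.1.2 = a₂ := (h₂.le_iff_eq y.2.2).1 hy.2
  exact ⟨e₁.ge, e₂.ge⟩

theorem isGLB_mk_mk_bot (h : Disjoint a₁ b₁) :
    IsGLB {mk a₁ a₂ ha₁ ha₂, mk b₁ b₂ hb₁ hb₂} ⊥ := by
  rw [mk, mk, ← Set.image_pair, WithBot.isGLB_image_coe_bot_iff, Set.eq_empty_iff_forall_notMem]
  intro y hy
  have hya : y ≤ _ := hy (Set.mem_insert _ _)
  have hyb : y ≤ _ := hy (Set.mem_insert_of_mem _ rfl)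
  exact y.2.1 (le_bot_iff.1 (h hya.1 hyb.1))

end PartialOrder

variable {a₁ b₁ : L₁} {a₂ b₂ : L₂}

theorem isLUB_mk_mk [SemilatticeSup L₁] [OrderBot L₁] [SemilatticeSup L₂] [OrderBot L₂]
    {ha₁ : a₁ ≠ ⊥} {hb₁ : b₁ ≠ ⊥} {ha₂ : a₂ ≠ ⊥} {hb₂ : b₂ ≠ ⊥} :
    IsLUB {mk a₁ a₂ ha₁ ha₂, mk b₁ b₂ hb₁ hb₂}
      (mk (a₁ ⊔ b₁) (a₂ ⊔ b₂) (ne_bot_of_le_ne_bot ha₁ le_sup_left)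
        (ne_bot_of_le_ne_bot ha₂ le_sup_left)) := by
  rw [mk, mk, mk, ← Set.image_pair]
  refine WithBot.isLUB_image_coe (Set.insert_nonempty _ _) (.of_image Subtype.coe_le_coe ?_)
  rw [Set.image_pair]
  exact isLUB_pair

theorem not_coveringLaw [Lattice L₁] [OrderBot L₁] [Lattice L₂] [OrderBot L₂]
    {p₁ q₁ : L₁} {p₂ q₂ : L₂} (hp₁ : IsAtom p₁) (hq₁ : IsAtom q₁) (h₁ : p₁ ≠ q₁)
    (hp₂ : IsAtom p₂) (hq₂ : IsAtom q₂) (h₂ : p₂ ≠ q₂) :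
    ¬ CoveringLaw (LatticeCoprod L₁ L₂) := by
  intro hcov
  have hbetween := hcov (mk q₁ q₂ hq₁.ne_bot hq₂.ne_bot) (mk p₁ p₂ hp₁.ne_bot hp₂.ne_bot)
    (mk (p₁ ⊔ q₁) p₂ (ne_bot_of_le_ne_bot hp₁.ne_bot le_sup_left) hp₂.ne_bot) _
    (isAtom_mk hq₁ hq₂) (isGLB_mk_mk_bot (hp₁.disjoint_of_ne hq₁ h₁)) isLUB_mk_mk
    (mk_le_mk.2 ⟨le_sup_left, le_rfl⟩) (mk_le_mk.2 ⟨le_rfl, le_sup_left⟩)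
  rcases hbetween with h | h
  · exact h₁ ((hp₁.le_iff_eq hq₁.ne_bot).1 (sup_eq_left.1 (mk_inj.1 h).1)).symm
  · exact h₂ ((hp₂.le_iff_eq hq₂.ne_bot).1 (left_eq_sup.1 (mk_inj.1 h).2)).symm

end LatticeCoprod

/-- Let `L₁`, `L₂` be complete atomistic lattices and let `L₁ ∐ L₂` be
their coproduct (realized as `WithBot` of the pairs with nonbottom components, ordered
componentwise with an added bottom `0`). If `L₁ ∐ L₂` satisfies the covering law
(for every atom `c` and elements `a`, `b` with `a ⊓ c = ⊥` — i.e. `⊥` is the greatest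
lower bound of `{a, c}` — and `a ≤ b ≤ a ⊔ c` — where `a ⊔ c` is a least upper bound `s`
of `{a, c}` — one has `b = a` or `b = s`), then `L₁` is trivial or `L₂` is trivial. -/
theorem coprod_covering_law_implies_trivial_factor {L₁ L₂ : Type*}
    [CompleteLattice L₁] [CompleteLattice L₂]
    [IsAtomistic L₁] [IsAtomistic L₂]
    (hcov : ∀ c a b s : WithBot {x : L₁ × L₂ // x.1 ≠ ⊥ ∧ x.2 ≠ ⊥},
      IsAtom c → IsGLB {a, c} ⊥ → IsLUB {a, c} s → a ≤ b → b ≤ s →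
      b = a ∨ b = s) :
    (∀ x : L₁, x = ⊥ ∨ x = ⊤) ∨ (∀ x : L₂, x = ⊥ ∨ x = ⊤) := by
  by_contra! hnontrivial
  obtain ⟨⟨x₁, hx₁bot, hx₁top⟩, ⟨x₂, hx₂bot, hx₂top⟩⟩ := hnontrivial
  obtain ⟨p₁, q₁, hp₁, hq₁, h₁⟩ := exists_atoms_ne_of_ne_bot_of_ne_top hx₁bot hx₁top
  obtain ⟨p₂, q₂, hp₂, hq₂, h₂⟩ := exists_atoms_ne_of_ne_bot_of_ne_top hx₂bot hx₂top
  exact LatticeCoprod.not_coveringLaw hp₁ hq₁ h₁ hp₂ hq₂ h₂ hcov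
end
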